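/- arXiv:1812.05073 — 3 statements merged into one kernel-verified Lean document; each statement's English description precedes it below -/
import Mathlib

section
/- Let n ≥ 1, let B be a nonnegative irreducible n×n real matrix, let D be a nonnegative diagonal n×n real matrix, and set J = B − D. Then there exists a real number λ0 that is an eigenvalue of J such that every complex eigenvalue λ of J satisfies Re(λ) ≤ λ0; moreover, there exists a vector Z ∈ ℝ^n with Z > 0 componentwise and J Z = λ0 Z, and every vector Y ∈ ℝ^n satisfying J Y = λ0 Y is a scalar multiple of Z. -/
/-!
Shifting by a constant `c ≥ max Dᵢᵢ` turns `J = B - D` into a nonnegative matrix `A = J + c`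
that dominates `B`, so irreducibility of `B` makes `P = (1 + A) ^ K` entrywise positive for
large `K`. For a positive matrix `P`, the Collatz–Wielandt number
`r = max {t | t • w ≤ P w for some w ≥ 0, w ≠ 0}` exists by compactness of the simplex, and
maximality forces it to be an eigenvalue whose eigenspace is a line spanned by a positive
vector `Z`. As `A` commutes with `P`, it preserves that line: `A Z = μ Z` and `r = (1 + μ) ^ K`.
If `J v = λ v` over `ℂ`, then `|v|` shows `|1 + λ + c| ^ K ≤ r`, whence `Re λ ≤ μ - c`.
-/

open Matrix

namespace Matrix

variable {ι : Type*}

lemma IsDiag.apply_le_sub_add_smul_one {R : Type*} [Ring R] [PartialOrder R] [IsOrderedRing R]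
    [DecidableEq ι] (B : Matrix ι ι R) {D : Matrix ι ι R} (hD : D.IsDiag) {c : R}
    (hc : ∀ i, D i i ≤ c) (i j : ι) : B i j ≤ (B - D + c • 1) i j := by
  rcases eq_or_ne i j with rfl | hij
  · simpa [sub_add_eq_add_sub, le_sub_iff_add_le] using hc i
  · simp [hD hij, one_apply_ne hij]

variable [Fintype ι]

section Eigenvector

variable {R : Type*} [CommRing R] [DecidableEq ι] {M : Matrix ι ι R} {v : ι → R} {μ : R}

lemma pow_mulVec_eq_smul (h : M *ᵥ v = μ • v) (k : ℕ) : (M ^ k) *ᵥ v = μ ^ k • v := by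
  induction k with
  | zero => simp
  | succ k ih => rw [pow_succ, ← mulVec_mulVec, h, mulVec_smul, ih, smul_smul, pow_succ']

lemma one_add_pow_mulVec_eq_smul (h : M *ᵥ v = μ • v) (k : ℕ) :
    ((1 + M) ^ k) *ᵥ v = (1 + μ) ^ k • v :=
  pow_mulVec_eq_smul (by rw [add_mulVec, one_mulVec, h, add_smul, one_smul]) k

lemma add_smul_one_mulVec_eq_add_smul_iff (c : R) :
    (M + c • 1) *ᵥ v = (μ + c) • v ↔ M *ᵥ v = μ • v := by
  rw [add_mulVec, smul_mulVec, one_mulVec, add_smul, add_left_inj]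

lemma exists_mulVec_eq_smul_of_aeval_charpoly_eq_zero {K : Type*} [Field K] [Algebra R K]
    {z : K} (h : Polynomial.aeval z M.charpoly = 0) :
    ∃ w ≠ 0, M.map (algebraMap R K) *ᵥ w = z • w := by
  have hroot : (M.map (algebraMap R K)).toLin'.charpoly.IsRoot z := by
    rwa [charpoly_toLin', charpoly_map, Polynomial.IsRoot, Polynomial.eval_map,
      ← Polynomial.aeval_def]
  obtain ⟨w, hw⟩ :=
    ((Module.End.hasEigenvalue_iff_isRoot_charpoly _ _).mpr hroot).exists_hasEigenvector
  exact ⟨w, hw.2, by simpa using hw.apply_eq_smul⟩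

end Eigenvector

section EntrywiseOrder

variable {α : Type*} [Semiring α] [PartialOrder α] [IsOrderedRing α]

lemma mulVec_nonneg {M : Matrix ι ι α} (hM : ∀ i j, 0 ≤ M i j) {w : ι → α} (hw : 0 ≤ w) :
    0 ≤ M *ᵥ w :=
  fun i => Finset.sum_nonneg fun j _ => mul_nonneg (hM i j) (hw j)

lemma mul_apply_le_mul_apply {M M' N N' : Matrix ι ι α} (hM : ∀ i j, 0 ≤ M i j)
    (hMM' : ∀ i j, M i j ≤ M' i j) (hN : ∀ i j, 0 ≤ N i j) (hNN' : ∀ i j, N i j ≤ N' i j)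
    (i j : ι) : (M * N) i j ≤ (M' * N') i j :=
  Finset.sum_le_sum fun l _ =>
    mul_le_mul (hMM' i l) (hNN' l j) (hN l j) ((hM i l).trans (hMM' i l))

variable [DecidableEq ι]

lemma pow_apply_le_pow_apply {M M' : Matrix ι ι α} (hM : ∀ i j, 0 ≤ M i j)
    (hMM' : ∀ i j, M i j ≤ M' i j) (k : ℕ) (i j : ι) : (M ^ k) i j ≤ (M' ^ k) i j := by
  induction k generalizing i j with
  | zero => rfl
  | succ k ih =>
    rw [pow_succ, pow_succ]
    exact mul_apply_le_mul_apply (pow_apply_nonneg hM k) ih hM hMM' i j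

lemma pow_apply_le_one_add_pow_apply {A : Matrix ι ι α} (hA : ∀ i j, 0 ≤ A i j) {k m : ℕ}
    (hkm : k ≤ m) (i j : ι) : (A ^ k) i j ≤ ((1 + A) ^ m) i j := by
  have h1 : ∀ i j, (1 : Matrix ι ι α) i j ≤ (1 + A) i j :=
    fun i j => le_add_of_nonneg_right (hA i j)
  have hA1 : ∀ i j, A i j ≤ (1 + A) i j :=
    fun i j => le_add_of_nonneg_left (zero_le_one_elem i j)
  calc (A ^ k) i j = (1 ^ (m - k) * A ^ k) i j := by rw [one_pow, one_mul]
    _ ≤ ((1 + A) ^ (m - k) * (1 + A) ^ k) i j :=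
      mul_apply_le_mul_apply (pow_apply_nonneg zero_le_one_elem _)
        (pow_apply_le_pow_apply zero_le_one_elem h1 _) (pow_apply_nonneg hA k)
        (pow_apply_le_pow_apply hA hA1 k) i j
    _ = ((1 + A) ^ m) i j := by rw [← pow_add, Nat.sub_add_cancel hkm]

lemma IsIrreducible.exists_pos_one_add_pow {R : Type*} [Ring R] [LinearOrder R]
    [IsOrderedRing R] [PosMulStrictMono R] [Nontrivial R] {A B : Matrix ι ι R}
    (hB : B.IsIrreducible) (hBA : ∀ i j, B i j ≤ A i j) :
    ∃ K ≠ 0, ∀ i j, 0 < ((1 + A) ^ K) i j := by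
  choose k _ hk using (isIrreducible_iff_exists_pow_pos hB.nonneg).mp hB
  obtain ⟨m, hm⟩ := Finite.exists_le fun p : ι × ι => k p.1 p.2
  refine ⟨m + 1, m.succ_ne_zero, fun i j => (hk i j).trans_le ?_⟩
  exact (pow_apply_le_pow_apply hB.nonneg hBA _ i j).trans
    (pow_apply_le_one_add_pow_apply (fun i j => (hB.nonneg i j).trans (hBA i j))
      ((hm (i, j)).trans m.le_succ) i j)

end EntrywiseOrder

section CollatzWielandt

variable {M : Matrix ι ι ℝ}

def collatzWielandtSet (M : Matrix ι ι ℝ) : Set ℝ :=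
  {t | ∃ w : ι → ℝ, 0 ≤ w ∧ w ≠ 0 ∧ t • w ≤ M *ᵥ w}

lemma mulVec_pos (hM : ∀ i j, 0 < M i j) {w : ι → ℝ} (hw : 0 ≤ w) (hw0 : w ≠ 0) (i : ι) :
    0 < (M *ᵥ w) i := by
  obtain ⟨j, hj⟩ := Function.ne_iff.mp hw0
  exact Finset.sum_pos' (fun l _ => mul_nonneg (hM i l).le (hw l))
    ⟨j, Finset.mem_univ j, mul_pos (hM i j) ((hw j).lt_of_ne' hj)⟩

lemma inv_sum_smul_mem_stdSimplex {w : ι → ℝ} (hw : 0 ≤ w) (hw0 : w ≠ 0) :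
    (∑ i, w i)⁻¹ • w ∈ stdSimplex ℝ ι := by
  have hs : 0 < ∑ i, w i := by
    obtain ⟨j, hj⟩ := Function.ne_iff.mp hw0
    exact Finset.sum_pos' (fun i _ => hw i) ⟨j, Finset.mem_univ j, (hw j).lt_of_ne' hj⟩
  refine ⟨fun i => mul_nonneg (inv_nonneg.mpr hs.le) (hw i), ?_⟩
  simp only [Pi.smul_apply, smul_eq_mul, ← Finset.mul_sum]
  exact inv_mul_cancel₀ hs.ne'

lemma le_sum_sum_of_smul_le_mulVec (hM : ∀ i j, 0 ≤ M i j) {t : ℝ} {w : ι → ℝ}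
    (hw : w ∈ stdSimplex ℝ ι) (htw : t • w ≤ M *ᵥ w) : t ≤ ∑ i, ∑ j, M i j :=
  calc t = ∑ i, t * w i := by rw [← Finset.mul_sum, hw.2, mul_one]
    _ ≤ ∑ i, ∑ j, M i j * w j := Finset.sum_le_sum fun i _ => htw i
    _ ≤ ∑ i, ∑ j, M i j := Finset.sum_le_sum fun i _ => Finset.sum_le_sum fun j _ =>
        mul_le_of_le_one_right (hM i j) (mem_Icc_of_mem_stdSimplex hw j).2

lemma exists_isGreatest_collatzWielandtSet [Nonempty ι] (hM : ∀ i j, 0 ≤ M i j) :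
    ∃ r, IsGreatest (collatzWielandtSet M) r := by
  classical
  set K := {p : ℝ × (ι → ℝ) | 0 ≤ p.1 ∧ p.2 ∈ stdSimplex ℝ ι ∧ p.1 • p.2 ≤ M *ᵥ p.2}
  have hK : IsCompact K := by
    refine ((isCompact_Icc (a := 0) (b := ∑ i, ∑ j, M i j)).prod
      (isCompact_stdSimplex ℝ ι)).of_isClosed_subset ?_ ?_
    · exact (isClosed_le continuous_const continuous_fst).inter
        (((isClosed_stdSimplex ℝ ι).preimage continuous_snd).inter
          (isClosed_le (continuous_fst.smul continuous_snd)
            (continuous_const.matrix_mulVec continuous_snd)))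
    · rintro ⟨t, w⟩ ⟨ht, hw, htw⟩
      exact ⟨⟨ht, le_sum_sum_of_smul_le_mulVec hM hw htw⟩, hw⟩
  obtain ⟨i⟩ := ‹Nonempty ι›
  have h0 : ((0 : ℝ), (Pi.single i 1 : ι → ℝ)) ∈ K :=
    ⟨le_rfl, single_mem_stdSimplex ℝ i, by
      simpa using mulVec_nonneg hM (Pi.single_nonneg.mpr zero_le_one)⟩
  obtain ⟨⟨r, Z⟩, ⟨hr, hZ, hrZ⟩, hmax⟩ :=
    hK.exists_isMaxOn ⟨_, h0⟩ continuous_fst.continuousOn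
  refine ⟨r, ⟨Z, hZ.1, fun h => by simpa [h] using hZ.2, hrZ⟩, ?_⟩
  rintro t ⟨w, hw, hw0, htw⟩
  rcases lt_or_ge t 0 with ht | ht
  · exact ht.le.trans hr
  · refine hmax (⟨ht, inv_sum_smul_mem_stdSimplex hw hw0, ?_⟩ : (t, _) ∈ K)
    rw [mulVec_smul, smul_comm]
    exact smul_le_smul_of_nonneg_left htw (inv_nonneg.mpr (Finset.sum_nonneg fun i _ => hw i))

lemma exists_pos_smul_le [Nonempty ι] {u w : ι → ℝ} (hu : ∀ i, 0 < u i) (hw : ∀ i, 0 < w i) :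
    ∃ ε > (0 : ℝ), ε • w ≤ u := by
  obtain ⟨i₀, hi₀⟩ := Finite.exists_min fun i => u i / w i
  exact ⟨u i₀ / w i₀, div_pos (hu i₀) (hw i₀), fun i => (le_div_iff₀ (hw i)).mp (hi₀ i)⟩

lemma mulVec_eq_smul_of_isGreatest [Nonempty ι] (hM : ∀ i j, 0 < M i j) {r : ℝ}
    (hr : IsGreatest (collatzWielandtSet M) r) {Z : ι → ℝ} (hZ : 0 ≤ Z) (hZ0 : Z ≠ 0)
    (hrZ : r • Z ≤ M *ᵥ Z) : M *ᵥ Z = r • Z := by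
  by_contra hne
  obtain ⟨i⟩ := ‹Nonempty ι›
  set w := M *ᵥ Z
  have hw := mulVec_pos hM hZ hZ0
  -- if `Z` is not an eigenvector, then `w = M Z` improves the Collatz–Wielandt bound `r`
  obtain ⟨ε, hε, hεw⟩ := exists_pos_smul_le
    (mulVec_pos hM (sub_nonneg.mpr hrZ) (sub_ne_zero.mpr hne)) hw
  have hrε : r + ε ∈ collatzWielandtSet M := by
    refine ⟨w, fun i => (hw i).le, fun h => (hw i).ne' (congrFun h i), ?_⟩
    calc (r + ε) • w = r • w + ε • w := add_smul r ε w
      _ ≤ r • w + M *ᵥ (w - r • Z) := by gcongr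
      _ = M *ᵥ w := by rw [mulVec_sub, mulVec_smul]; abel
  linarith [hr.2 hrε]

lemma eq_zero_of_mulVec_eq_smul_of_apply_eq_zero (hM : ∀ i j, 0 < M i j) {r : ℝ}
    {w : ι → ℝ} (hw : 0 ≤ w) (hMw : M *ᵥ w = r • w) {i : ι} (hi : w i = 0) : w = 0 := by
  by_contra hw0
  have h := mulVec_pos hM hw hw0 i
  rw [hMw, Pi.smul_apply, hi, smul_zero] at h
  exact h.false

lemma pos_of_mulVec_eq_smul (hM : ∀ i j, 0 < M i j) {r : ℝ} {Z : ι → ℝ} (hZ : 0 ≤ Z)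
    (hZ0 : Z ≠ 0) (hMZ : M *ᵥ Z = r • Z) (i : ι) : 0 < Z i :=
  (hZ i).lt_of_ne' fun h => hZ0 (eq_zero_of_mulVec_eq_smul_of_apply_eq_zero hM hZ hMZ h)

lemma exists_eq_smul_of_mulVec_eq_smul [Nonempty ι] (hM : ∀ i j, 0 < M i j) {r : ℝ}
    {Z Y : ι → ℝ} (hZ : ∀ i, 0 < Z i) (hMZ : M *ᵥ Z = r • Z) (hMY : M *ᵥ Y = r • Y) :
    ∃ c : ℝ, Y = c • Z := by
  -- subtracting the largest admissible multiple of `Z` leaves a nonnegative eigenvector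
  -- with a zero entry
  obtain ⟨i₀, hi₀⟩ := Finite.exists_min fun i => Y i / Z i
  refine ⟨Y i₀ / Z i₀, sub_eq_zero.mp (eq_zero_of_mulVec_eq_smul_of_apply_eq_zero hM
    (r := r) (i := i₀) (fun i => ?_) ?_ ?_)⟩
  · simpa [sub_nonneg] using (le_div_iff₀ (hZ i)).mp (hi₀ i)
  · rw [mulVec_sub, mulVec_smul, hMY, hMZ, smul_sub, smul_comm]
  · simp [div_mul_cancel₀ _ (hZ i₀).ne']

theorem exists_perron_of_pos [Nonempty ι] (hM : ∀ i j, 0 < M i j) :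
    ∃ r, IsGreatest (collatzWielandtSet M) r ∧ ∃ Z : ι → ℝ, (∀ i, 0 < Z i) ∧ M *ᵥ Z = r • Z ∧
      ∀ Y, M *ᵥ Y = r • Y → ∃ c : ℝ, Y = c • Z := by
  obtain ⟨r, hr⟩ := exists_isGreatest_collatzWielandtSet fun i j => (hM i j).le
  obtain ⟨Z, hZ, hZ0, hrZ⟩ := hr.1
  have hMZ := mulVec_eq_smul_of_isGreatest hM hr hZ hZ0 hrZ
  have hZpos := pos_of_mulVec_eq_smul hM hZ hZ0 hMZ
  exact ⟨r, hr, Z, hZpos, hMZ, fun Y hMY => exists_eq_smul_of_mulVec_eq_smul hM hZpos hMZ hMY⟩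

lemma norm_mem_collatzWielandtSet (hM : ∀ i j, 0 ≤ M i j) {z : ℂ} {v : ι → ℂ} (hv : v ≠ 0)
    (hMv : M.map (algebraMap ℝ ℂ) *ᵥ v = z • v) : ‖z‖ ∈ collatzWielandtSet M := by
  refine ⟨fun i => ‖v i‖, fun i => norm_nonneg _,
    fun h => hv (funext fun i => norm_eq_zero.mp (congrFun h i)), fun i => ?_⟩
  calc ‖z‖ * ‖v i‖ = ‖(M.map (algebraMap ℝ ℂ) *ᵥ v) i‖ := by
        rw [hMv, Pi.smul_apply, smul_eq_mul, norm_mul]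
    _ ≤ ∑ j, ‖(M i j : ℂ) * v j‖ := norm_sum_le _ _
    _ = (M *ᵥ fun i => ‖v i‖) i := by simp [mulVec, dotProduct, abs_of_nonneg (hM _ _)]

end CollatzWielandt

theorem exists_perron_of_pos_one_add_pow [DecidableEq ι] [Nonempty ι] {A : Matrix ι ι ℝ}
    (hA : ∀ i j, 0 ≤ A i j) {K : ℕ} (hK : K ≠ 0) (hP : ∀ i j, 0 < ((1 + A) ^ K) i j) :
    ∃ μ : ℝ, (∀ z : ℂ, ∀ v ≠ 0, A.map (algebraMap ℝ ℂ) *ᵥ v = z • v → ‖1 + z‖ ≤ 1 + μ) ∧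
      ∃ Z : ι → ℝ, (∀ i, 0 < Z i) ∧ A *ᵥ Z = μ • Z ∧
        ∀ Y, A *ᵥ Y = μ • Y → ∃ c : ℝ, Y = c • Z := by
  obtain ⟨r, hr, Z, hZ, hPZ, huniq⟩ := exists_perron_of_pos hP
  obtain ⟨i⟩ := ‹Nonempty ι›
  have hPAZ : (1 + A) ^ K *ᵥ (A *ᵥ Z) = r • (A *ᵥ Z) := by
    rw [mulVec_mulVec, (((Commute.one_left A).add_left (Commute.refl A)).pow_left K).eq,
      ← mulVec_mulVec, hPZ, mulVec_smul]
  obtain ⟨μ, hAZ⟩ := huniq _ hPAZ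
  have hμ : 0 ≤ μ := by
    have h := mulVec_nonneg hA (fun j => (hZ j).le) i
    rw [hAZ, Pi.smul_apply, smul_eq_mul] at h
    exact nonneg_of_mul_nonneg_left h (hZ i)
  have hr_eq : r = (1 + μ) ^ K := smul_left_injective ℝ (fun h => (hZ i).ne' (congrFun h i))
    (hPZ.symm.trans (one_add_pow_mulVec_eq_smul hAZ K))
  refine ⟨μ, fun z v hv hAv => ?_, Z, hZ, hAZ,
    fun Y hY => huniq Y (by rw [one_add_pow_mulVec_eq_smul hY, hr_eq])⟩
  have hPv : ((1 + A) ^ K).map (algebraMap ℝ ℂ) *ᵥ v = (1 + z) ^ K • v := by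
    rw [← RingHom.mapMatrix_apply, map_pow, map_add, map_one, RingHom.mapMatrix_apply]
    exact one_add_pow_mulVec_eq_smul hAv K
  have h := hr.2 (norm_mem_collatzWielandtSet
    (pow_apply_nonneg (fun i j => add_nonneg (zero_le_one_elem i j) (hA i j)) K) hv hPv)
  rw [norm_pow, hr_eq] at h
  exact (pow_le_pow_iff_left₀ (norm_nonneg _) (by linarith) hK).mp h

end Matrix

theorem stmt_0_general {n : ℕ} (hn : 1 ≤ n)
    (B D : Matrix (Fin n) (Fin n) ℝ)
    (hBnn : ∀ i j, 0 ≤ B i j)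
    (hBirr : ∀ i j, ∃ k : ℕ, 0 < k ∧ 0 < (B ^ k) i j)
    (hDdiag : D.IsDiag) :
    ∃ l0 : ℝ,
      (∀ lam : ℂ, (Polynomial.aeval lam) (B - D).charpoly = 0 → lam.re ≤ l0) ∧
      ∃ Z : Fin n → ℝ, (∀ i, 0 < Z i) ∧ (B - D).mulVec Z = l0 • Z ∧
        ∀ Y : Fin n → ℝ, (B - D).mulVec Y = l0 • Y → ∃ c : ℝ, Y = c • Z := by
  have : Nonempty (Fin n) := ⟨⟨0, hn⟩⟩
  obtain ⟨c, hc⟩ := Finite.exists_le fun i => D i i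
  set A := B - D + c • 1
  have hBA := hDdiag.apply_le_sub_add_smul_one B hc
  obtain ⟨K, hK, hP⟩ :=
    ((isIrreducible_iff_exists_pow_pos hBnn).mpr hBirr).exists_pos_one_add_pow hBA
  obtain ⟨μ, hspec, Z, hZ, hAZ, huniq⟩ :=
    exists_perron_of_pos_one_add_pow (fun i j => (hBnn i j).trans (hBA i j)) hK hP
  refine ⟨μ - c, fun z hz => ?_, Z, hZ, ?_, fun Y hY => huniq Y ?_⟩
  · obtain ⟨v, hv, hJv⟩ := exists_mulVec_eq_smul_of_aeval_charpoly_eq_zero hz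
    have hAmap : A.map (algebraMap ℝ ℂ) = (B - D).map (algebraMap ℝ ℂ) + (c : ℂ) • 1 := by
      ext i j
      rcases eq_or_ne i j with rfl | h <;> simp [A, one_apply_ne, *]
    have h := hspec (z + c) v hv (by rwa [hAmap, add_smul_one_mulVec_eq_add_smul_iff])
    have hre := Complex.re_le_norm (1 + (z + c))
    simp only [Complex.add_re, Complex.one_re, Complex.ofReal_re] at hre
    linarith
  · rwa [← add_smul_one_mulVec_eq_add_smul_iff c, sub_add_cancel]
  · have h := (add_smul_one_mulVec_eq_add_smul_iff c).mpr hY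
    rwa [sub_add_cancel] at h

/-- **Perron–Frobenius for `J = B - D`** with `B` nonnegative irreducible and `D`
nonnegative diagonal: there is a real eigenvalue `λ0` of `J` dominating the real parts
of all complex eigenvalues of `J`, possessing a componentwise positive eigenvector `Z`
that is unique up to scalar multiples. -/
theorem stmt_0 {n : ℕ} (hn : 1 ≤ n)
    (B D : Matrix (Fin n) (Fin n) ℝ)
    (hBnn : ∀ i j, 0 ≤ B i j)
    (hBirr : ∀ i j, ∃ k : ℕ, 0 < k ∧ 0 < (B ^ k) i j)
    (hDdiag : D.IsDiag) (hDnn : ∀ i, 0 ≤ D i i) :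
    ∃ l0 : ℝ,
      (∀ lam : ℂ, (Polynomial.aeval lam) (B - D).charpoly = 0 → lam.re ≤ l0) ∧
      ∃ Z : Fin n → ℝ, (∀ i, 0 < Z i) ∧ (B - D).mulVec Z = l0 • Z ∧
        ∀ Y : Fin n → ℝ, (B - D).mulVec Y = l0 • Y → ∃ c : ℝ, Y = c • Z :=
  stmt_0_general hn B D hBnn hBirr hDdiag
end

section
/- Let β, δ, γ1, γ2, p0, k1, k2 be real numbers with γ1 + γ2 > 0, and set p1 = γ2/(γ1+γ2) and p2 = γ1/(γ1+γ2). Let J0 be the 2×2 real matrix with entries J0_{11} = β k1 p1 − (γ1+δ), J0_{12} = β k1 p1 + γ2, J0_{21} = β k1 p2 + γ1, J0_{22} = β p2 (k1 + p0 k2) − (γ2+δ). Then the discriminant of the characteristic polynomial of J0 satisfies (trace J0)^2 − 4 det J0 = (β(k1 − k2 p0 p2) + γ1 + γ2)^2 + 4 β k2 p0 p2 (γ1 + β k1 p2). In particular, if additionally β > 0, k1 ≥ 0, k2 > 0, p0 > 0, γ1 > 0 and γ2 > 0, then this discriminant is strictly positive and J0 has two distinct real eigenvalues. -/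
open Polynomial

theorem Matrix.exists_ne_isRoot_charpoly_of_discr_pos (A : Matrix (Fin 2) (Fin 2) ℝ)
    (h : 0 < A.trace ^ 2 - 4 * A.det) :
    ∃ l₁ l₂ : ℝ, l₁ ≠ l₂ ∧ A.charpoly.IsRoot l₁ ∧ A.charpoly.IsRoot l₂ := by
  set s := √(A.trace ^ 2 - 4 * A.det)
  have hs_pos : 0 < s := Real.sqrt_pos.2 h
  have hs_sq : discrim 1 (-A.trace) A.det = s * s := by
    rw [Real.mul_self_sqrt h.le, discrim]; ring
  have isRoot_iff (l : ℝ) :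
      A.charpoly.IsRoot l ↔ l = (A.trace + s) / 2 ∨ l = (A.trace - s) / 2 := by
    have roots := quadratic_eq_zero_iff one_ne_zero hs_sq l
    simp only [neg_neg, mul_one] at roots
    rw [A.charpoly_fin_two, IsRoot.def, ← roots]
    simp only [eval_add, eval_sub, eval_mul, eval_pow, eval_C, eval_X]
    ring_nf
  refine ⟨(A.trace + s) / 2, (A.trace - s) / 2, ?_, (isRoot_iff _).2 (.inl rfl),
    (isRoot_iff _).2 (.inr rfl)⟩
  intro heq
  linarith

def sisJacobian (β δ γ1 γ2 p0 k1 k2 p1 p2 : ℝ) : Matrix (Fin 2) (Fin 2) ℝ :=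
  !![β * k1 * p1 - (γ1 + δ), β * k1 * p1 + γ2;
     β * k1 * p2 + γ1, β * p2 * (k1 + p0 * k2) - (γ2 + δ)]

theorem sisJacobian_trace_sq_sub_four_mul_det {β δ γ1 γ2 p0 k1 k2 p1 p2 : ℝ}
    (hγ : γ1 + γ2 ≠ 0) (hp1 : p1 = γ2 / (γ1 + γ2)) (hp2 : p2 = γ1 / (γ1 + γ2)) :
    (sisJacobian β δ γ1 γ2 p0 k1 k2 p1 p2).trace ^ 2 -
        4 * (sisJacobian β δ γ1 γ2 p0 k1 k2 p1 p2).det =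
      (β * (k1 - k2 * p0 * p2) + γ1 + γ2) ^ 2 + 4 * β * k2 * p0 * p2 * (γ1 + β * k1 * p2) := by
  subst hp1 hp2
  rw [sisJacobian, Matrix.trace_fin_two_of, Matrix.det_fin_two_of]
  field_simp
  ring

/-- For the Jacobian `J0` at the disease-free equilibrium of the two-layer mean-field
SIS system, the discriminant of the characteristic polynomial equals
`(β(k1 - k2 p0 p2) + γ1 + γ2)² + 4 β k2 p0 p2 (γ1 + β k1 p2)`; under the stated
positivity assumptions it is strictly positive and `J0` has two distinct real
eigenvalues. -/
theorem stmt_8 (β δ γ1 γ2 p0 k1 k2 : ℝ) (hγ : 0 < γ1 + γ2)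
    (p1 p2 : ℝ) (hp1 : p1 = γ2 / (γ1 + γ2)) (hp2 : p2 = γ1 / (γ1 + γ2))
    (J0 : Matrix (Fin 2) (Fin 2) ℝ)
    (hJ0 : J0 = !![β * k1 * p1 - (γ1 + δ), β * k1 * p1 + γ2;
                   β * k1 * p2 + γ1, β * p2 * (k1 + p0 * k2) - (γ2 + δ)]) :
    (J0.trace ^ 2 - 4 * J0.det =
      (β * (k1 - k2 * p0 * p2) + γ1 + γ2) ^ 2 +
        4 * β * k2 * p0 * p2 * (γ1 + β * k1 * p2)) ∧
    (0 < β → 0 ≤ k1 → 0 < k2 → 0 < p0 → 0 < γ1 → 0 < γ2 →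
      0 < J0.trace ^ 2 - 4 * J0.det ∧
      ∃ l1 l2 : ℝ, l1 ≠ l2 ∧ J0.charpoly.IsRoot l1 ∧ J0.charpoly.IsRoot l2) := by
  have hdisc : J0.trace ^ 2 - 4 * J0.det =
      (β * (k1 - k2 * p0 * p2) + γ1 + γ2) ^ 2 + 4 * β * k2 * p0 * p2 * (γ1 + β * k1 * p2) :=
    hJ0 ▸ sisJacobian_trace_sq_sub_four_mul_det hγ.ne' hp1 hp2
  refine ⟨hdisc, fun hβ hk1 hk2 hp0 hγ1 _ => ?_⟩
  have hp2_pos : 0 < p2 := hp2 ▸ div_pos hγ1 hγ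
  have hpos : 0 < J0.trace ^ 2 - 4 * J0.det := by rw [hdisc]; positivity
  exact ⟨hpos, J0.exists_ne_isRoot_charpoly_of_discr_pos hpos⟩
end

section
/- Let δ, γ1, γ2, p0, k1, k2 be strictly positive real numbers, and set p1 = γ2/(γ1+γ2) and p2 = γ1/(γ1+γ2). Consider the quadratic polynomial in β given by Q(β) = k1 k2 p0 p2 p1 β² − (k2 p0 p2 (γ1+δ) + k1 (γ1+γ2+δ)) β + δ (γ1+γ2+δ), obtained from the critical condition β k2 p0 p2 (β k1 p1 − (γ1+δ)) = (β k1 − δ)(γ1+γ2+δ). Then Q has two distinct real roots β1 and β2 satisfying 0 < β1 < β2. -/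
/-!
`Q(β) = a β² - b β + c` has `a, b, c > 0`, so both roots are positive once the discriminant is.
Writing `b = u + v` with `u = k2 p0 p2 (γ1 + δ)` and `v = k1 (γ1 + γ2 + δ)`, AM-GM gives
`b² ≥ 4 u v`, and `4 a c = 4 u v · p1 δ / (γ1 + δ) < 4 u v` because `p1 < 1`.
-/

theorem exists_pos_roots_of_sq_gt {a b c : ℝ} (ha : 0 < a) (hb : 0 < b) (hc : 0 < c)
    (hdiscrim : 4 * a * c < b ^ 2) :
    ∃ x y : ℝ, 0 < x ∧ x < y ∧ a * x ^ 2 - b * x + c = 0 ∧ a * y ^ 2 - b * y + c = 0 := by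
  set s := √(b ^ 2 - 4 * a * c)
  have hs : 0 < s := Real.sqrt_pos.mpr (by linarith)
  have hs_sq : s ^ 2 = b ^ 2 - 4 * a * c := Real.sq_sqrt (by linarith)
  have hs_lt : s < b := by nlinarith
  have hroot : ∀ x, x = (b + s) / (2 * a) ∨ x = (b - s) / (2 * a) →
      a * x ^ 2 - b * x + c = 0 := by
    intro x hx
    have hd : discrim a (-b) c = s * s := by rw [discrim, ← sq, hs_sq]; ring
    have := (quadratic_eq_zero_iff ha.ne' hd x).mpr (by simpa only [neg_neg] using hx)
    linear_combination this
  refine ⟨(b - s) / (2 * a), (b + s) / (2 * a), by apply div_pos <;> linarith,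
    by gcongr; linarith, hroot _ (.inr rfl), hroot _ (.inl rfl)⟩

/-- The quadratic `Q(β)` determining the critical transmission rate of the two-layer
mean-field SIS system has two distinct real roots `0 < β1 < β2`. -/
theorem stmt_11 (δ γ1 γ2 p0 k1 k2 : ℝ)
    (hδ : 0 < δ) (hγ1 : 0 < γ1) (hγ2 : 0 < γ2) (hp0 : 0 < p0)
    (hk1 : 0 < k1) (hk2 : 0 < k2)
    (p1 p2 : ℝ) (hp1 : p1 = γ2 / (γ1 + γ2)) (hp2 : p2 = γ1 / (γ1 + γ2))
    (Q : ℝ → ℝ)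
    (hQ : ∀ β : ℝ, Q β =
      k1 * k2 * p0 * p2 * p1 * β ^ 2 -
        (k2 * p0 * p2 * (γ1 + δ) + k1 * (γ1 + γ2 + δ)) * β +
        δ * (γ1 + γ2 + δ)) :
    ∃ β1 β2 : ℝ, 0 < β1 ∧ β1 < β2 ∧ Q β1 = 0 ∧ Q β2 = 0 := by
  have hp1_pos : 0 < p1 := by rw [hp1]; positivity
  have hp2_pos : 0 < p2 := by rw [hp2]; positivity
  have hp1_lt : p1 < 1 := by rw [hp1, div_lt_one (by positivity)]; linarith
  have hdiscrim : 4 * (k1 * k2 * p0 * p2 * p1) * (δ * (γ1 + γ2 + δ)) <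
      (k2 * p0 * p2 * (γ1 + δ) + k1 * (γ1 + γ2 + δ)) ^ 2 := by
    have huv : 0 < k1 * k2 * p0 * p2 * (γ1 + γ2 + δ) := by positivity
    calc 4 * (k1 * k2 * p0 * p2 * p1) * (δ * (γ1 + γ2 + δ))
        = 4 * (k1 * k2 * p0 * p2 * (γ1 + γ2 + δ)) * (p1 * δ) := by ring
      _ < 4 * (k1 * k2 * p0 * p2 * (γ1 + γ2 + δ)) * (γ1 + δ) := by gcongr; nlinarith
      _ = 4 * (k2 * p0 * p2 * (γ1 + δ)) * (k1 * (γ1 + γ2 + δ)) := by ring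
      _ ≤ _ := four_mul_le_sq_add _ _
  obtain ⟨β1, β2, hβ1, hβ12, hQ1, hQ2⟩ :=
    exists_pos_roots_of_sq_gt (by positivity) (by positivity) (by positivity) hdiscrim
  exact ⟨β1, β2, hβ1, hβ12, by rw [hQ, hQ1], by rw [hQ, hQ2]⟩
end
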